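/- arXiv:1105.0437 — 2 statements merged into one kernel-verified Lean document; each statement's English description precedes it below -/
import Mathlib

section
/- Let M = (m_{ij}) be an n×n complex matrix (n ≥ 1) that is strictly row diagonally dominant, i.e., |m_{ii}| > Σ_{j≠i} |m_{ij}| for every i. Let D = diag(m_{11},…,m_{nn}) and ρ = ρ(D⁻¹(M − D)). Then ρ ≤ max_i Σ_{j≠i} |m_{ij}/m_{ii}| < 1, and with c = −n·ln(1 − ρ) the relative error bound |det(M) − Π_{i=1}^n m_{ii}| / |Π_{i=1}^n m_{ii}| ≤ c ρ · e^{c ρ} holds. If in addition c ρ < 1, then |det(M) − Π_{i=1}^n m_{ii}| / |Π_{i=1}^n m_{ii}| ≤ (7/4) c ρ. -/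
/-!
With `D` the diagonal part of `M` and `A = D⁻¹ (M - D)`, one has `det M = det D · det (1 + A)` and
`det (1 + A) = ∏ (1 + μ)` over the eigenvalues `μ` of `A`. Gershgorin's theorem bounds each `‖μ‖`
by a row sum of `A`, i.e. by some `rowRatioSum M i < 1`. As `A` has zero diagonal, `∑ μ = tr A = 0`,
so `∏ (1 + μ) = exp L` with `L = ∑ (log (1 + μ) - μ)`, and comparing Taylor series termwise gives
`‖L‖ ≤ n (-log (1 - ρ) - ρ) ≤ c ρ` and `‖exp L - 1‖ ≤ exp ‖L‖ - 1`. The two final bounds are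
`e^t - 1 ≤ t e^t` and, by convexity, `e^t - 1 ≤ (e - 1) t` for `0 ≤ t ≤ 1`.
-/

open Matrix

/-- The sum `Σ_{j ≠ i} |m_{ij} / m_{ii}|` of scaled off-diagonal moduli in row `i`. -/
noncomputable def rowRatioSum {n : ℕ} (M : Matrix (Fin n) (Fin n) ℂ) (i : Fin n) : ℝ :=
  ∑ j ∈ Finset.univ.erase i, ‖M i j / M i i‖

open Polynomial Finset

namespace Complex

theorem norm_exp_sub_one_le_exp_norm_sub_one (z : ℂ) : ‖exp z - 1‖ ≤ Real.exp ‖z‖ - 1 := by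
  have hz : HasSum (fun n : ℕ => z ^ (n + 1) / (n + 1).factorial) (exp z - 1) := by
    have h := NormedSpace.expSeries_div_hasSum_exp z
    rw [← exp_eq_exp_ℂ] at h
    simpa using (hasSum_nat_add_iff' 1).mpr h
  have hr : HasSum (fun n : ℕ => ‖z‖ ^ (n + 1) / (n + 1).factorial) (Real.exp ‖z‖ - 1) := by
    have h := NormedSpace.expSeries_div_hasSum_exp ‖z‖
    rw [← Real.exp_eq_exp_ℝ] at h
    simpa using (hasSum_nat_add_iff' 1).mpr h
  exact hz.norm_le_of_bounded hr fun n => by simp [norm_pow]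

theorem norm_log_one_add_sub_self_le_neg_log_one_sub {z : ℂ} {r : ℝ} (hz : ‖z‖ ≤ r)
    (hr : r < 1) : ‖log (1 + z) - z‖ ≤ -Real.log (1 - r) - r := by
  have hlog : HasSum (fun n : ℕ => (-1) ^ (n + 3) * z ^ (n + 2) / (n + 2 : ℕ))
      (log (1 + z) - z) := by
    simpa [Finset.sum_range_succ] using
      (hasSum_nat_add_iff' 2).mpr (hasSum_taylorSeries_log (hz.trans_lt hr))
  have hneglog : HasSum (fun n : ℕ => r ^ (n + 2) / (n + 2 : ℕ)) (-Real.log (1 - r) - r) := by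
    have hr' : |r| < 1 := abs_lt.2 ⟨by linarith [(norm_nonneg z).trans hz], hr⟩
    simpa [Finset.sum_range_succ, add_assoc, one_add_one_eq_two] using
      (hasSum_nat_add_iff' 1).mpr (Real.hasSum_pow_div_log_of_abs_lt_one hr')
  refine hlog.norm_le_of_bounded hneglog fun n => ?_
  simp only [norm_div, norm_mul, norm_pow, norm_neg, norm_one, one_pow, one_mul, norm_natCast]
  gcongr

theorem norm_multiset_prod_one_add_sub_one_le {s : Multiset ℂ} (hs : s.sum = 0) {r : ℝ}
    (hr : r < 1) (hsr : ∀ μ ∈ s, ‖μ‖ ≤ r) :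
    ‖(s.map (1 + ·)).prod - 1‖ ≤ Real.exp (Multiset.card s * (-Real.log (1 - r) - r)) - 1 := by
  set L := (s.map fun μ => log (1 + μ) - μ).sum with hLdef
  have hexp : exp L = (s.map (1 + ·)).prod := by
    rw [hLdef, Multiset.sum_map_sub, Multiset.map_id', hs, sub_zero, exp_multiset_sum,
      Multiset.map_map]
    refine congrArg _ (Multiset.map_congr rfl fun μ hμ => exp_log fun h => ?_)
    have : ‖μ‖ = 1 := by rw [eq_neg_of_add_eq_zero_right h, norm_neg, norm_one]
    linarith [hsr μ hμ]
  have hL : ‖L‖ ≤ Multiset.card s * (-Real.log (1 - r) - r) := by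
    calc ‖L‖ ≤ (s.map fun μ => ‖log (1 + μ) - μ‖).sum := by
          rw [hLdef]
          exact (norm_multiset_sum_le _).trans_eq (by rw [Multiset.map_map]; rfl)
      _ ≤ Multiset.card s * (-Real.log (1 - r) - r) := by
          refine (Multiset.sum_le_card_nsmul _ _ fun x hx => ?_).trans_eq
            (by rw [Multiset.card_map, nsmul_eq_mul])
          obtain ⟨μ, hμ, rfl⟩ := Multiset.mem_map.1 hx
          exact norm_log_one_add_sub_self_le_neg_log_one_sub (hsr μ hμ) hr
  rw [← hexp]
  exact (norm_exp_sub_one_le_exp_norm_sub_one L).trans (by gcongr)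

end Complex

namespace Real

theorem neg_log_one_sub_sub_le_mul {r : ℝ} (hr : r < 1) :
    -log (1 - r) - r ≤ r * -log (1 - r) := by
  have h := one_sub_inv_le_log_of_pos (sub_pos.2 hr)
  have h2 := mul_le_mul_of_nonneg_left h (sub_pos.2 hr).le
  rw [mul_sub, mul_inv_cancel₀ (sub_pos.2 hr).ne'] at h2
  linarith

theorem exp_sub_one_le_mul_exp (x : ℝ) : exp x - 1 ≤ x * exp x := by
  have h := mul_le_mul_of_nonneg_right (one_sub_le_exp_neg x) (exp_pos x).le
  rwa [← exp_add, neg_add_cancel, exp_zero, sub_mul, one_mul, sub_le_comm] at h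

theorem exp_sub_one_le_mul_of_mem_Icc {x : ℝ} (h0 : 0 ≤ x) (h1 : x ≤ 1) :
    exp x - 1 ≤ (exp 1 - 1) * x := by
  have := convexOn_exp.2 (Set.mem_univ 0) (Set.mem_univ 1) (sub_nonneg.2 h1) h0 (by ring)
  simp only [smul_eq_mul, mul_zero, mul_one, zero_add, exp_zero] at this
  linarith

end Real

namespace Matrix

variable {n : Type*} [Fintype n] [DecidableEq n]

theorem card_roots_charpoly {K : Type*} [Field K] [IsAlgClosed K] (A : Matrix n n K) :
    Multiset.card A.charpoly.roots = Fintype.card n := by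
  rw [← (IsAlgClosed.splits A.charpoly).natDegree_eq_card_roots, charpoly_natDegree_eq_dim]

theorem det_one_add_eq_prod_roots_charpoly {K : Type*} [Field K] [IsAlgClosed K]
    (A : Matrix n n K) : (1 + A).det = (A.charpoly.roots.map (1 + ·)).prod := by
  have h := (IsAlgClosed.splits A.charpoly).eval_eq_prod_roots_of_monic A.charpoly_monic (-1)
  have hneg : A.charpoly.roots.map (fun μ => -1 - μ) =
      (A.charpoly.roots.map (1 + ·)).map Neg.neg := by
    rw [Multiset.map_map]
    exact Multiset.map_congr rfl fun μ _ => by simp only [Function.comp_apply]; ring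
  have hscalar : scalar n (-1 : K) - A = -(1 + A) := by
    rw [map_neg, map_one, neg_add, sub_eq_add_neg]
  rw [eval_charpoly, hscalar, det_neg, hneg, Multiset.prod_map_neg, Multiset.card_map,
    card_roots_charpoly] at h
  exact mul_left_cancel₀ (pow_ne_zero _ (neg_ne_zero.2 one_ne_zero)) h

theorem exists_dist_le_of_mem_roots_charpoly {K : Type*} [NormedField K] {A : Matrix n n K} {μ : K}
    (hμ : μ ∈ A.charpoly.roots) : ∃ k, dist μ (A k k) ≤ ∑ j ∈ univ.erase k, ‖A k j‖ := by
  refine eigenvalue_mem_ball (Module.End.HasEigenvalue.of_mem_spectrum ?_)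
  rw [spectrum_toLin', mem_spectrum_iff_isRoot_charpoly]
  exact isRoot_of_mem_roots hμ

theorem det_eq_det_mul_det_one_add_inv_mul_sub {K : Type*} [Field K] {D : Matrix n n K}
    (hD : IsUnit D.det) (M : Matrix n n K) : M.det = D.det * (1 + D⁻¹ * (M - D)).det := by
  rw [← det_mul, mul_add, mul_one, mul_nonsing_inv_cancel_left _ _ hD, add_sub_cancel]

/-- `D⁻¹ (M - D)` for the diagonal part `D` of `M`. -/
noncomputable def jacobiMatrix {K : Type*} [Field K] (M : Matrix n n K) : Matrix n n K :=
  (diagonal fun i => M i i)⁻¹ * (M - diagonal fun i => M i i)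

section jacobiMatrix

variable {K : Type*} [Field K] {M : Matrix n n K}

theorem jacobiMatrix_apply (hM : ∀ i, M i i ≠ 0) (i j : n) :
    jacobiMatrix M i j = if i = j then 0 else M i j / M i i := by
  have hinv : (diagonal fun i => M i i)⁻¹ = diagonal fun i => (M i i)⁻¹ :=
    inv_eq_right_inv (by simp only [diagonal_mul_diagonal, mul_inv_cancel₀ (hM _), diagonal_one])
  rw [jacobiMatrix, hinv, diagonal_mul, sub_apply]
  split_ifs with h
  · subst h; simp
  · rw [diagonal_apply_ne _ h, sub_zero, inv_mul_eq_div]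

theorem trace_jacobiMatrix (hM : ∀ i, M i i ≠ 0) : (jacobiMatrix M).trace = 0 :=
  sum_eq_zero fun i _ => by rw [diag_apply, jacobiMatrix_apply hM, if_pos rfl]

theorem det_eq_prod_diag_mul_det_one_add_jacobiMatrix (hM : ∀ i, M i i ≠ 0) :
    M.det = (∏ i, M i i) * (1 + jacobiMatrix M).det := by
  rw [jacobiMatrix, ← det_diagonal]
  exact det_eq_det_mul_det_one_add_inv_mul_sub
    (by rw [det_diagonal]; exact isUnit_iff_ne_zero.2 (prod_ne_zero_iff.2 fun i _ => hM i)) M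

end jacobiMatrix

end Matrix

theorem sum_norm_jacobiMatrix_erase {n : ℕ} {M : Matrix (Fin n) (Fin n) ℂ}
    (hM : ∀ i, M i i ≠ 0) (i : Fin n) :
    ∑ j ∈ univ.erase i, ‖jacobiMatrix M i j‖ = rowRatioSum M i :=
  sum_congr rfl fun j hj => by rw [jacobiMatrix_apply hM, if_neg (ne_of_mem_erase hj).symm]

theorem exists_norm_le_rowRatioSum_of_mem_roots {n : ℕ} {M : Matrix (Fin n) (Fin n) ℂ}
    (hM : ∀ i, M i i ≠ 0) {μ : ℂ} (hμ : μ ∈ (jacobiMatrix M).charpoly.roots) :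
    ∃ k, ‖μ‖ ≤ rowRatioSum M k := by
  obtain ⟨k, hk⟩ := exists_dist_le_of_mem_roots_charpoly hμ
  rw [jacobiMatrix_apply hM, if_pos rfl, dist_zero_right, sum_norm_jacobiMatrix_erase hM] at hk
  exact ⟨k, hk⟩

theorem rowRatioSum_lt_one {n : ℕ} {M : Matrix (Fin n) (Fin n) ℂ}
    (hdd : ∀ i, ∑ j ∈ univ.erase i, ‖M i j‖ < ‖M i i‖) (i : Fin n) : rowRatioSum M i < 1 := by
  have hMi : 0 < ‖M i i‖ := (sum_nonneg fun _ _ => norm_nonneg _).trans_lt (hdd i)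
  rw [rowRatioSum]
  simpa only [norm_div, ← sum_div, div_lt_one hMi] using hdd i

theorem norm_det_sub_prod_diag_div_le {n : ℕ} {M : Matrix (Fin n) (Fin n) ℂ}
    (hM : ∀ i, M i i ≠ 0) {ρ : ℝ} (hρ : ρ < 1)
    (hρub : ∀ μ ∈ (jacobiMatrix M).charpoly.roots, ‖μ‖ ≤ ρ) :
    ‖M.det - ∏ i, M i i‖ / ‖∏ i, M i i‖ ≤ Real.exp (-(n : ℝ) * Real.log (1 - ρ) * ρ) - 1 := by
  have hP : ‖∏ i, M i i‖ ≠ 0 := norm_ne_zero_iff.2 (prod_ne_zero_iff.2 fun i _ => hM i)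
  have hsum : (jacobiMatrix M).charpoly.roots.sum = 0 := by
    rw [← trace_eq_sum_roots_charpoly, trace_jacobiMatrix hM]
  rw [det_eq_prod_diag_mul_det_one_add_jacobiMatrix hM, ← mul_sub_one, norm_mul,
    mul_div_cancel_left₀ _ hP, det_one_add_eq_prod_roots_charpoly]
  refine (Complex.norm_multiset_prod_one_add_sub_one_le hsum hρ hρub).trans ?_
  rw [card_roots_charpoly, Fintype.card_fin]
  have := mul_le_mul_of_nonneg_left (Real.neg_log_one_sub_sub_le_mul hρ) n.cast_nonneg
  exact sub_le_sub_right (Real.exp_le_exp.2 (by linarith)) 1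

/-- **Corollary (strictly diagonally dominant matrices).**
If `M` is strictly row diagonally dominant, `D` is its diagonal part and
`ρ = ρ(D⁻¹(M - D))`, then `ρ ≤ max_i Σ_{j≠i} |m_{ij}/m_{ii}| < 1`, and with
`c = -n ln(1-ρ)` the relative error of the product of the diagonal entries as an
approximation of `det M` is at most `c ρ e^{c ρ}`; if moreover `c ρ < 1`, it is
at most `(7/4) c ρ`. -/
theorem stmt5 {n : ℕ} (hn : 1 ≤ n)
    (M : Matrix (Fin n) (Fin n) ℂ)
    (hdd : ∀ i : Fin n,
      ∑ j ∈ Finset.univ.erase i, ‖M i j‖ < ‖M i i‖)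
    (D A : Matrix (Fin n) (Fin n) ℂ)
    (hD : D = Matrix.diagonal (fun i => M i i)) (hA : A = D⁻¹ * (M - D))
    (ρ : ℝ)
    (hρub : ∀ μ ∈ A.charpoly.roots, ‖μ‖ ≤ ρ)
    (hρmax : ∃ μ ∈ A.charpoly.roots, ‖μ‖ = ρ)
    (c : ℝ) (hc : c = -(n : ℝ) * Real.log (1 - ρ)) :
    (∃ i : Fin n, (∀ i' : Fin n, rowRatioSum M i' ≤ rowRatioSum M i) ∧
        ρ ≤ rowRatioSum M i ∧ rowRatioSum M i < 1) ∧
      ‖M.det - ∏ i, M i i‖ / ‖∏ i, M i i‖ ≤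
        c * ρ * Real.exp (c * ρ) ∧
      (c * ρ < 1 →
        ‖M.det - ∏ i, M i i‖ / ‖∏ i, M i i‖ ≤
          7 / 4 * (c * ρ)) := by
  subst hD
  obtain rfl : A = jacobiMatrix M := hA
  have hM : ∀ i, M i i ≠ 0 := fun i =>
    norm_pos_iff.1 ((sum_nonneg fun _ _ => norm_nonneg _).trans_lt (hdd i))
  have : Nonempty (Fin n) := ⟨⟨0, hn⟩⟩
  obtain ⟨i, hi⟩ := Finite.exists_max (rowRatioSum M)
  obtain ⟨μ, hμ, rfl⟩ := hρmax
  have hμ_le : ‖μ‖ ≤ rowRatioSum M i := by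
    obtain ⟨k, hk⟩ := exists_norm_le_rowRatioSum_of_mem_roots hM hμ
    exact hk.trans (hi k)
  have hμ_lt : ‖μ‖ < 1 := hμ_le.trans_lt (rowRatioSum_lt_one hdd i)
  have herr : ‖M.det - ∏ i, M i i‖ / ‖∏ i, M i i‖ ≤ Real.exp (c * ‖μ‖) - 1 :=
    hc ▸ norm_det_sub_prod_diag_div_le hM hμ_lt hρub
  have hcμ : 0 ≤ c * ‖μ‖ := by
    have hlog := Real.log_nonpos (sub_nonneg.2 hμ_lt.le) (sub_le_self 1 (norm_nonneg μ))
    rw [hc]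
    exact mul_nonneg (mul_nonneg_of_nonpos_of_nonpos (neg_nonpos.2 n.cast_nonneg) hlog)
      (norm_nonneg μ)
  refine ⟨⟨i, hi, hμ_le, rowRatioSum_lt_one hdd i⟩, herr.trans (Real.exp_sub_one_le_mul_exp _),
    fun hcμ1 => herr.trans ?_⟩
  calc Real.exp (c * ‖μ‖) - 1 ≤ (Real.exp 1 - 1) * (c * ‖μ‖) :=
        Real.exp_sub_one_le_mul_of_mem_Icc hcμ hcμ1.le
    _ ≤ 7 / 4 * (c * ‖μ‖) := by
      gcongr
      linarith [Real.exp_one_lt_d9]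
end

section
/- Let M = (m_{ij}) be an n×n Hermitian positive-definite complex matrix. For each i ∈ {1,…,n} choose an index set J_i ⊆ {1,…,i} with i ∈ J_i, and let σ_i be the diagonal entry of (M[J_i,J_i])⁻¹ corresponding to index i. Fix some j with 1 < j ≤ n and let Ĵ_j ⊆ J_j be a subset with j ∈ Ĵ_j, and let σ̂_j be the diagonal entry of (M[Ĵ_j,Ĵ_j])⁻¹ corresponding to index j. Then det(M) ≤ Π_{i=1}^n (1/σ_i) ≤ (1/σ̂_j) · Π_{i=1, i≠j}^n (1/σ_i); that is, enlarging a principal submatrix can only improve the sparse inverse determinant approximation. -/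
/-!
For positive definite `B`, Cauchy–Schwarz for the inner product `⟪x, y⟫ = xᴴ B y` gives
`1 / (B⁻¹)ₖₖ = min {yᴴ B y : yₖ = 1}`. Enlarging the index set of a principal submatrix enlarges
the set of admissible `y`, so it can only increase `σᵢ`; this is the second inequality. For the
first, `Jᵢ ⊆ {1, …, i}` gives `σᵢ ≤ τᵢ`, the value for the leading `i × i` block, and the cofactor
formula `1 / τᵢ = det M[1..i] / det M[1..i-1]` makes `∏ 1 / τᵢ` telescope to `det M`.
-/

open Matrix
open scoped ComplexOrder

/-- For a principal submatrix `M[J,J]` of `M` and an index `i ∈ J`, the diagonal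
entry of `(M[J,J])⁻¹` in the position corresponding to `i`. -/
noncomputable def sigmaEntry {n : ℕ} (M : Matrix (Fin n) (Fin n) ℂ)
    (J : Finset (Fin n)) (i : Fin n) (hi : i ∈ J) : ℂ :=
  (M.submatrix (fun a : J => (a : Fin n)) (fun a : J => (a : Fin n)))⁻¹ ⟨i, hi⟩ ⟨i, hi⟩

namespace Matrix

section Extend

variable {R : Type*} [NonUnitalNonAssocSemiring R] {ι κ : Type*} [Fintype ι] [Fintype κ]

theorem mulVec_extend_apply (B : Matrix κ κ R) {e : ι → κ} (he : e.Injective) (x : ι → R)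
    (a : ι) : (B *ᵥ Function.extend e x 0) (e a) = (B.submatrix e e *ᵥ x) a := by
  refine (Fintype.sum_of_injective e he _ _ (fun k hk => ?_) (fun b => ?_)).symm
  · rw [Function.extend_apply' _ _ _ hk, Pi.zero_apply, mul_zero]
  · rw [he.extend_apply]; rfl

theorem star_extend_dotProduct_mulVec_extend [StarRing R] (B : Matrix κ κ R) {e : ι → κ}
    (he : e.Injective) (x : ι → R) :
    star (Function.extend e x 0) ⬝ᵥ B *ᵥ Function.extend e x 0 =
      star x ⬝ᵥ B.submatrix e e *ᵥ x := by
  refine (Fintype.sum_of_injective e he _ _ (fun k hk => ?_) (fun a => ?_)).symm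
  · rw [Pi.star_apply, Function.extend_apply' _ _ _ hk, Pi.zero_apply, star_zero, zero_mul]
  · rw [Pi.star_apply, Pi.star_apply, he.extend_apply, mulVec_extend_apply B he]

end Extend

section Variational

variable {𝕜 : Type*} [RCLike 𝕜] {ι κ : Type*} [Fintype ι] [Fintype κ] [DecidableEq κ]

/-- Cauchy–Schwarz for the inner product `⟪x, y⟫ = xᴴ B y`, applied to `y` and `B⁻¹ eₖ`. -/
theorem PosDef.norm_sq_apply_le {B : Matrix κ κ 𝕜} (hB : B.PosDef) (y : κ → 𝕜) (k : κ) :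
    ‖y k‖ ^ 2 ≤ RCLike.re (star y ⬝ᵥ B *ᵥ y) * RCLike.re (B⁻¹ k k) := by
  let := B.toSeminormedAddCommGroup hB.posSemidef
  let := B.toInnerProductSpace hB.posSemidef
  set u := B⁻¹ *ᵥ Pi.single k 1
  have hBu : B *ᵥ u = Pi.single k 1 := by
    rw [mulVec_mulVec, mul_nonsing_inv _ ((isUnit_iff_isUnit_det B).mp hB.isUnit), one_mulVec]
  have hyu : (inner 𝕜 y u : 𝕜) = star (y k) := by
    change (B *ᵥ u) ⬝ᵥ star y = _
    rw [hBu, single_one_dotProduct]; rfl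
  have hyy : (inner 𝕜 y y : 𝕜) = star y ⬝ᵥ B *ᵥ y := dotProduct_comm _ _
  have huu : (inner 𝕜 u u : 𝕜) = star (B⁻¹ k k) := by
    change (B *ᵥ u) ⬝ᵥ star u = _
    rw [hBu, single_one_dotProduct]
    simp [u]
  have := inner_mul_inner_self_le (𝕜 := 𝕜) y u
  rw [← inner_conj_symm u y, hyu, hyy, huu] at this
  simpa [sq, RCLike.star_def] using this

variable [DecidableEq ι]

theorem PosDef.re_inv_submatrix_apply_le {B : Matrix κ κ 𝕜} (hB : B.PosDef) {e : ι → κ}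
    (he : e.Injective) (i : ι) :
    RCLike.re ((B.submatrix e e)⁻¹ i i) ≤ RCLike.re (B⁻¹ (e i) (e i)) := by
  set A := B.submatrix e e
  set x := A⁻¹ *ᵥ Pi.single i 1
  have hAx : A *ᵥ x = Pi.single i 1 := by
    rw [mulVec_mulVec, mul_nonsing_inv _ ((isUnit_iff_isUnit_det A).mp (hB.submatrix he).isUnit),
      one_mulVec]
  have hxi : x i = A⁻¹ i i := by simp [x]
  have hσ : 0 < RCLike.re (A⁻¹ i i) := (RCLike.pos_iff.mp (hB.submatrix he).inv.diag_pos).1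
  have hquad : star x ⬝ᵥ A *ᵥ x = star (A⁻¹ i i) := by
    rw [hAx, dotProduct_single_one, Pi.star_apply, hxi]
  have hCS := hB.norm_sq_apply_le (Function.extend e x 0) (e i)
  rw [he.extend_apply, star_extend_dotProduct_mulVec_extend B he, hquad, hxi, RCLike.star_def,
    RCLike.conj_re] at hCS
  have hre := pow_le_pow_left₀ hσ.le (RCLike.re_le_norm (A⁻¹ i i)) 2
  exact le_of_mul_le_mul_left (by nlinarith) hσ

end Variational

section Leading

variable {K : Type*} [Field K]

theorem inv_apply_last_last {k : ℕ} (A : Matrix (Fin (k + 1)) (Fin (k + 1)) K) :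
    A⁻¹ (Fin.last k) (Fin.last k) = (A.submatrix Fin.castSucc Fin.castSucc).det / A.det := by
  rw [inv_def, smul_apply, adjugate_fin_succ_eq_det_submatrix, Fin.succAbove_last,
    ← two_mul, pow_mul, neg_one_sq, one_pow, one_mul, Ring.inverse_eq_inv', smul_eq_mul,
    inv_mul_eq_div]

def leadingSubmatrix {n : ℕ} (M : Matrix (Fin n) (Fin n) K) {k : ℕ} (hk : k ≤ n) :
    Matrix (Fin k) (Fin k) K :=
  M.submatrix (Fin.castLE hk) (Fin.castLE hk)

theorem det_eq_prod_inv_inv_leadingSubmatrix_last {n : ℕ} (M : Matrix (Fin n) (Fin n) K)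
    (hM : ∀ k (hk : k ≤ n), (leadingSubmatrix M hk).det ≠ 0) :
    M.det = ∏ i : Fin n, ((leadingSubmatrix M i.isLt)⁻¹ (Fin.last i) (Fin.last i))⁻¹ := by
  induction n with
  | zero => simp
  | succ n ih =>
    have hM' : (M.submatrix Fin.castSucc Fin.castSucc).det ≠ 0 := hM n n.le_succ
    calc M.det = (M.submatrix Fin.castSucc Fin.castSucc).det *
          (M⁻¹ (Fin.last n) (Fin.last n))⁻¹ := by
          rw [inv_apply_last_last, inv_div, mul_div_cancel₀ _ hM']
      _ = _ := by
          rw [ih _ fun k hk => hM k (hk.trans n.le_succ), Fin.prod_univ_castSucc]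
          rfl

end Leading

theorem PosDef.re_det_eq_prod_leadingSubmatrix {𝕜 : Type*} [RCLike 𝕜] {n : ℕ}
    {M : Matrix (Fin n) (Fin n) 𝕜} (hM : M.PosDef) :
    RCLike.re M.det =
      ∏ i : Fin n, 1 / RCLike.re ((leadingSubmatrix M i.isLt)⁻¹ (Fin.last i) (Fin.last i)) := by
  have hblock {k : ℕ} (hk : k ≤ n) : (leadingSubmatrix M hk).PosDef :=
    hM.submatrix (Fin.castLE_injective hk)
  have hreal (i : Fin n) :
      (RCLike.re ((leadingSubmatrix M i.isLt)⁻¹ (Fin.last i) (Fin.last i)) : 𝕜) =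
        (leadingSubmatrix M i.isLt)⁻¹ (Fin.last i) (Fin.last i) :=
    (hblock _).inv.isHermitian.coe_re_apply_self _
  rw [det_eq_prod_inv_inv_leadingSubmatrix_last M fun k hk => (hblock hk).det_pos.ne',
    ← RCLike.ofReal_re (K := 𝕜) (∏ i : Fin n, _)]
  push_cast
  simp only [hreal, one_div]

end Matrix

section SparseInverse

variable {n : ℕ} {M : Matrix (Fin n) (Fin n) ℂ}

theorem sigmaEntry_re_pos (hM : M.PosDef) (J : Finset (Fin n)) (i : Fin n) (hi : i ∈ J) :
    0 < (sigmaEntry M J i hi).re :=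
  (Complex.pos_iff.mp (hM.submatrix Subtype.val_injective).inv.diag_pos).1

theorem sigmaEntry_re_le_of_subset (hM : M.PosDef) {S T : Finset (Fin n)} (hST : S ⊆ T)
    {i : Fin n} (hi : i ∈ S) : (sigmaEntry M S i hi).re ≤ (sigmaEntry M T i (hST hi)).re :=
  (hM.submatrix Subtype.val_injective).re_inv_submatrix_apply_le (Set.inclusion_injective hST)
    ⟨i, hi⟩

theorem sigmaEntry_re_le_leadingSubmatrix (hM : M.PosDef) {J : Finset (Fin n)} {i : Fin n}
    (hJ : ∀ a ∈ J, a ≤ i) (hi : i ∈ J) :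
    (sigmaEntry M J i hi).re ≤ ((leadingSubmatrix M i.isLt)⁻¹ (Fin.last i) (Fin.last i)).re :=
  (hM.submatrix (Fin.castLE_injective _)).re_inv_submatrix_apply_le
    (e := fun a : J => (⟨a, Nat.lt_succ_of_le (hJ a a.2)⟩ : Fin (i + 1)))
    (fun _ _ hab => Subtype.ext (Fin.ext (Fin.mk.inj hab))) ⟨i, hi⟩

end SparseInverse

theorem stmt12_general {n : ℕ}
    (M : Matrix (Fin n) (Fin n) ℂ) (hM : M.PosDef)
    (J : Fin n → Finset (Fin n))
    (hmem : ∀ i : Fin n, i ∈ J i)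
    (hle : ∀ i : Fin n, ∀ j ∈ J i, j ≤ i)
    (j : Fin n)
    (Jhat : Finset (Fin n)) (hsub : Jhat ⊆ J j) (hjhat : j ∈ Jhat) :
    M.det.re ≤ ∏ i : Fin n, (1 / (sigmaEntry M (J i) i (hmem i)).re) ∧
      ∏ i : Fin n, (1 / (sigmaEntry M (J i) i (hmem i)).re) ≤
        (1 / (sigmaEntry M Jhat j hjhat).re) *
          ∏ i ∈ Finset.univ.erase j, (1 / (sigmaEntry M (J i) i (hmem i)).re) := by
  have hσ i := sigmaEntry_re_pos hM (J i) i (hmem i)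
  have hτ i := sigmaEntry_re_le_leadingSubmatrix hM (hle i) (hmem i)
  constructor
  · exact hM.re_det_eq_prod_leadingSubmatrix.trans_le <|
      Finset.prod_le_prod (fun i _ => one_div_nonneg.mpr ((hσ i).trans_le (hτ i)).le)
        fun i _ => one_div_le_one_div_of_le (hσ i) (hτ i)
  · rw [← Finset.mul_prod_erase _ _ (Finset.mem_univ j)]
    exact mul_le_mul_of_nonneg_right
      (one_div_le_one_div_of_le (sigmaEntry_re_pos hM Jhat j hjhat)
        (sigmaEntry_re_le_of_subset hM hsub hjhat))
      (Finset.prod_nonneg fun i _ => (one_div_pos.mpr (hσ i)).le)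

/-- **Theorem (monotonicity of sparse inverse approximations).**
Let `M` be Hermitian positive definite, with `J_i ⊆ {1,…,i}`, `i ∈ J_i`, and
`σ_i` the diagonal entry of `(M[J_i,J_i])⁻¹` corresponding to `i`. Fix `j > 1`
and a subset `Ĵ_j ⊆ J_j` with `j ∈ Ĵ_j`, and let `σ̂_j` be the diagonal entry of
`(M[Ĵ_j,Ĵ_j])⁻¹` corresponding to `j`. Then
`det M ≤ Π_i (1/σ_i) ≤ (1/σ̂_j) Π_{i≠j} (1/σ_i)`:
enlarging a principal submatrix can only improve the approximation. -/
theorem stmt12 {n : ℕ}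
    (M : Matrix (Fin n) (Fin n) ℂ) (hM : M.PosDef)
    (J : Fin n → Finset (Fin n))
    (hmem : ∀ i : Fin n, i ∈ J i)
    (hle : ∀ i : Fin n, ∀ j ∈ J i, j ≤ i)
    (j : Fin n) (hj : 0 < (j : ℕ))
    (Jhat : Finset (Fin n)) (hsub : Jhat ⊆ J j) (hjhat : j ∈ Jhat) :
    M.det.re ≤ ∏ i : Fin n, (1 / (sigmaEntry M (J i) i (hmem i)).re) ∧
      ∏ i : Fin n, (1 / (sigmaEntry M (J i) i (hmem i)).re) ≤
        (1 / (sigmaEntry M Jhat j hjhat).re) *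
          ∏ i ∈ Finset.univ.erase j, (1 / (sigmaEntry M (J i) i (hmem i)).re) :=
  stmt12_general M hM J hmem hle j Jhat hsub hjhat
end
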